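/- Let π, π' be probability measures on ℝ×ℝ with respective first marginals μ and μ'. Let η ∈ Π(π,π') be a coupling of π and π' (a probability measure on ℝ×ℝ×ℝ×ℝ whose (x,y)-marginal is π and (x',y')-marginal is π'), let χ(dx,dx') = ∫_{(y,y')} η(dx,dy,dx',dy') and let (γ_{(x,x')}(dy,dy')) be a probability kernel with η(dx,dy,dx',dy') = χ(dx,dx') γ_{(x,x')}(dy,dy'). Then η is bicausal if and only if, χ(dx,dx')-almost everywhere, γ_{(x,x')} is a coupling between π_x and π'_{x'}. -/
import Mathlib


open MeasureTheory ProbabilityTheory Set Filter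

noncomputable section

/-- Lebesgue measure restricted to `(0,1)`. -/
def lam01 : Measure ℝ := volume.restrict (Set.Ioo 0 1)

/-- Cumulative distribution function `F_η(x) = η((-∞, x])`. -/
def Fcdf (η : Measure ℝ) (x : ℝ) : ℝ := (η (Set.Iic x)).toReal

/-- Left limit of the cumulative distribution function, `F_η(x-) = η((-∞, x))`. -/
def FcdfL (η : Measure ℝ) (x : ℝ) : ℝ := (η (Set.Iio x)).toReal

/-- Quantile function `F_η^{-1}(u) = inf {x : F_η(x) ≥ u}`. -/
def qf (η : Measure ℝ) (u : ℝ) : ℝ := sInf {x | u ≤ Fcdf η x}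

/-- `π` is a coupling between `μ` and `ν`. -/
def IsCoupling (π : Measure (ℝ × ℝ)) (μ ν : Measure ℝ) : Prop :=
  π.map Prod.fst = μ ∧ π.map Prod.snd = ν

/-- `W_ρ^ρ(η, η')`, the Wasserstein distance of order `ρ` raised to the power `ρ`. -/
def Wr (ρ : ℝ) (η η' : Measure ℝ) : ℝ :=
  sInf {c | ∃ π : Measure (ℝ × ℝ), IsCoupling π η η' ∧ c = ∫ p, |p.1 - p.2| ^ ρ ∂π}

/-- The Wasserstein distance of order `ρ`. -/
def W (ρ : ℝ) (η η' : Measure ℝ) : ℝ := Wr ρ η η' ^ (1 / ρ)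

/-- The stochastic order `η ≤_st η'`: the quantile functions are ordered on `(0,1)`. -/
def StochOrder (η η' : Measure ℝ) : Prop := ∀ u ∈ Set.Ioo (0 : ℝ) 1, qf η u ≤ qf η' u

/-- The convex order `μ ≤_cx ν`: `∫ f dμ ≤ ∫ f dν` for every (integrable) convex `f`. -/
def ConvexOrder (μ ν : Measure ℝ) : Prop :=
  ∀ f : ℝ → ℝ, ConvexOn ℝ Set.univ f → Integrable f μ → Integrable f ν →
    ∫ x, f x ∂μ ≤ ∫ x, f x ∂ν

/-- `AW_ρ^ρ(π, π')`, the adapted Wasserstein distance of order `ρ` raised to the power `ρ`: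
the infimum over couplings `χ` between the first marginals of
`∫ (|x-x'|^ρ + W_ρ^ρ(π_x, π'_{x'})) dχ`, where `κ, κ'` are disintegration kernels of `π, π'`. -/
def AWr (ρ : ℝ) (π π' : Measure (ℝ × ℝ)) : ℝ :=
  sInf {c | ∃ (χ : Measure (ℝ × ℝ)) (κ κ' : Kernel ℝ ℝ),
      IsCoupling χ (π.map Prod.fst) (π'.map Prod.fst) ∧
      π = (π.map Prod.fst).compProd κ ∧ π' = (π'.map Prod.fst).compProd κ' ∧
      c = ∫ q, (|q.1 - q.2| ^ ρ + Wr ρ (κ q.1) (κ' q.2)) ∂χ}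

/-- The adapted Wasserstein distance of order `ρ`. -/
def AW (ρ : ℝ) (π π' : Measure (ℝ × ℝ)) : ℝ := AWr ρ π π' ^ (1 / ρ)

/-- The lifted adapted Wasserstein distance of order `ρ`, raised to the power `ρ`, between the
lifted couplings with first marginals `μ, μ'` and kernels `p, p'`. -/
def lAWr (ρ : ℝ) (μ : Measure ℝ) (p : ℝ → Measure ℝ) (μ' : Measure ℝ)
    (p' : ℝ → Measure ℝ) : ℝ :=
  sInf {c | ∃ χ : Measure (ℝ × ℝ), IsCoupling χ lam01 lam01 ∧
      c = ∫ q, (|q.1 - q.2| ^ ρ + |qf μ q.1 - qf μ' q.2| ^ ρ + Wr ρ (p q.1) (p' q.2)) ∂χ}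

/-- The probability kernel `p` encodes a lifted coupling
`λ_{(0,1)}(du) δ_{F_μ^{-1}(u)}(dx) p_u(dy)` between `μ` and `ν`. -/
def IsLiftedCoupling (μ ν : Measure ℝ) (p : ℝ → Measure ℝ) : Prop :=
  Measurable p ∧ (∀ u, IsProbabilityMeasure (p u)) ∧ lam01.bind p = ν

/-- The probability kernel `m` encodes a lifted martingale coupling between `μ` and `ν`. -/
def IsLiftedMartingale (μ ν : Measure ℝ) (m : ℝ → Measure ℝ) : Prop :=
  IsLiftedCoupling μ ν m ∧ ∀ᵐ u ∂lam01, (∫ y, y ∂(m u)) = qf μ u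

end

noncomputable section

/-- A coupling `η` between two probability measures `π, π'` on `ℝ × ℝ` is bicausal iff, writing
`χ(dx,dx') = μ(dx) χ_x(dx') = μ'(dx') χ_{x'}(dx)` for its `(x,x')`-marginal (with disintegration
kernels `χ₁, χ₂`), one has `∫_{y} η(dx,dy,dx',dy') = π'(dx',dy') χ_{x'}(dx)` and
`∫_{y'} η(dx,dy,dx',dy') = π(dx,dy) χ_x(dx')`. -/
def IsBicausal (π π' : Measure (ℝ × ℝ)) (η : Measure ((ℝ × ℝ) × (ℝ × ℝ))) : Prop :=
  η.map Prod.fst = π ∧ η.map Prod.snd = π' ∧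
  ∃ χ₁ χ₂ : Kernel ℝ ℝ,
    (η.map fun q => (q.1.1, q.2.1)) = (π.map Prod.fst).compProd χ₁ ∧
    (η.map fun q => (q.2.1, q.1.1)) = (π'.map Prod.fst).compProd χ₂ ∧
    (η.map fun q => (q.2, q.1.1)) = π'.compProd (χ₂.comap Prod.fst measurable_fst) ∧
    (η.map fun q => (q.1, q.2.1)) = π.compProd (χ₁.comap Prod.fst measurable_fst)

end

noncomputable section

open scoped ENNReal

namespace Stmt18Aux

variable {α β γ' δ : Type*} [MeasurableSpace α] [MeasurableSpace β] [MeasurableSpace γ']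
  [MeasurableSpace δ]

lemma ext_lintegral (μ ν : Measure α)
    (h : ∀ f : α → ℝ≥0∞, Measurable f → ∫⁻ a, f a ∂μ = ∫⁻ a, f a ∂ν) : μ = ν := by
  ext s hs
  rw [← lintegral_indicator_one hs, ← lintegral_indicator_one hs,
    h _ (measurable_one.indicator hs)]

lemma compProd_map (ρ : Measure α) [SFinite ρ] (κ : Kernel α β) [IsSFiniteKernel κ]
    {g : β → δ} (hg : Measurable g) :
    (ρ.compProd κ).map (fun p => (p.1, g p.2)) = ρ.compProd (κ.map g) := by
  have hm : Measurable fun p : α × β => (p.1, g p.2) :=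
    measurable_fst.prodMk (hg.comp measurable_snd)
  have hfm : ∀ f : α × δ → ℝ≥0∞, Measurable f →
      Measurable fun p : α × β => f (p.1, g p.2) := fun f hf => hf.comp hm
  refine ext_lintegral _ _ fun f hf => ?_
  rw [lintegral_map hf hm, Measure.lintegral_compProd (hfm f hf),
    Measure.lintegral_compProd hf]
  refine lintegral_congr fun a => ?_
  rw [Kernel.map_apply _ hg]
  exact (lintegral_map (hf.comp measurable_prodMk_left) hg).symm

lemma fubini_swap (μ : Measure α) [SFinite μ] (κ : Kernel α β) [IsMarkovKernel κ]
    (ξ : Kernel α γ') [IsSFiniteKernel ξ] :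
    (μ.compProd κ).compProd (ξ.comap Prod.fst measurable_fst)
      = ((μ.compProd ξ).compProd (κ.comap Prod.fst measurable_fst)).map
          (fun p => ((p.1.1, p.2), p.1.2)) := by
  have hT : Measurable fun p : (α × γ') × β => ((p.1.1, p.2), p.1.2) := by fun_prop
  refine ext_lintegral _ _ fun f hf => ?_
  have hfT : Measurable fun p : (α × γ') × β => f ((p.1.1, p.2), p.1.2) := hf.comp hT
  rw [lintegral_map hf hT, Measure.lintegral_compProd hf,
    Measure.lintegral_compProd (Measurable.lintegral_kernel_prod_right' hf),
    Measure.lintegral_compProd hfT,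
    Measure.lintegral_compProd (Measurable.lintegral_kernel_prod_right' hfT)]
  simp only [Kernel.comap_apply]
  refine lintegral_congr fun x => ?_
  exact lintegral_lintegral_swap ((hf.comp (show Measurable fun p : β × γ' => ((x, p.1), p.2)
    by fun_prop)).aemeasurable)

lemma snd_swap (χ : Measure (α × β)) [IsProbabilityMeasure χ] (κ : Kernel β γ')
    [IsSFiniteKernel κ] :
    χ.compProd (κ.comap Prod.snd measurable_snd)
      = ((χ.map Prod.swap).compProd (κ.comap Prod.fst measurable_fst)).map
          (fun r => ((r.1.2, r.1.1), r.2)) := by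
  haveI : IsProbabilityMeasure (χ.map Prod.swap) :=
    Measure.isProbabilityMeasure_map measurable_swap.aemeasurable
  have hS : Measurable fun r : (β × α) × γ' => ((r.1.2, r.1.1), r.2) := by fun_prop
  refine ext_lintegral _ _ fun f hf => ?_
  have hfS : Measurable fun r : (β × α) × γ' => f ((r.1.2, r.1.1), r.2) := hf.comp hS
  rw [lintegral_map hf hS, Measure.lintegral_compProd hf,
    Measure.lintegral_compProd hfS,
    lintegral_map (Measurable.lintegral_kernel_prod_right' hfS) measurable_swap]
  simp only [Kernel.comap_apply, Prod.fst_swap, Prod.snd_swap, Prod.mk.eta]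

end Stmt18Aux

end

/-- Lemma `lemmaBicausal`: given `η ∈ Π(π,π')` with `(x,x')`-marginal `χ` and
kernel `γ` such that `η(dx,dy,dx',dy') = χ(dx,dx') γ_{(x,x')}(dy,dy')`, the coupling `η` is
bicausal iff `χ(dx,dx')`-almost everywhere `γ_{(x,x')}` is a coupling between `π_x` and
`π'_{x'}`. -/

theorem stmt18
    (π π' : Measure (ℝ × ℝ)) [IsProbabilityMeasure π] [IsProbabilityMeasure π']
    (μ μ' : Measure ℝ) (hμ : μ = π.map Prod.fst) (hμ' : μ' = π'.map Prod.fst)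
    (κπ κπ' : Kernel ℝ ℝ) [IsMarkovKernel κπ] [IsMarkovKernel κπ']
    (hπd : π = μ.compProd κπ) (hπ'd : π' = μ'.compProd κπ')
    (η : Measure ((ℝ × ℝ) × (ℝ × ℝ)))
    (hη1 : η.map Prod.fst = π) (hη2 : η.map Prod.snd = π')
    (χ : Measure (ℝ × ℝ)) (hχ : χ = η.map (fun q => (q.1.1, q.2.1)))
    (γ : Kernel (ℝ × ℝ) (ℝ × ℝ)) [IsMarkovKernel γ]
    (hγ : η = (χ.compProd γ).map (fun q => ((q.1.1, q.2.1), (q.1.2, q.2.2)))) :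
    IsBicausal π π' η ↔ ∀ᵐ q ∂χ, IsCoupling (γ q) (κπ q.1) (κπ' q.2) := by
  
  classical
  haveI hηP : IsProbabilityMeasure η := by
    constructor
    rw [← Set.preimage_univ (f := @Prod.fst (ℝ × ℝ) (ℝ × ℝ)),
      ← Measure.map_apply measurable_fst MeasurableSet.univ, hη1, measure_univ]
  have hg0 : Measurable fun q : (ℝ × ℝ) × (ℝ × ℝ) => (q.1.1, q.2.1) := by fun_prop
  have hg1 : Measurable fun q : (ℝ × ℝ) × (ℝ × ℝ) => ((q.1.1, q.2.1), q.1.2) := by fun_prop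
  have hg2 : Measurable fun q : (ℝ × ℝ) × (ℝ × ℝ) => ((q.1.1, q.2.1), q.2.2) := by fun_prop
  have hφ : Measurable fun q : (ℝ × ℝ) × (ℝ × ℝ) => ((q.1.1, q.2.1), (q.1.2, q.2.2)) := by
    fun_prop
  have hT : Measurable fun p : (ℝ × ℝ) × ℝ => ((p.1.1, p.2), p.1.2) := by fun_prop
  have hT' : Measurable fun p : (ℝ × ℝ) × ℝ => ((p.1.2, p.2), p.1.1) := by fun_prop
  haveI hχP : IsProbabilityMeasure χ := hχ ▸ Measure.isProbabilityMeasure_map hg0.aemeasurable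
  haveI : IsProbabilityMeasure μ := hμ ▸ Measure.isProbabilityMeasure_map measurable_fst.aemeasurable
  haveI : IsProbabilityMeasure μ' := hμ' ▸ Measure.isProbabilityMeasure_map measurable_fst.aemeasurable
  haveI : IsProbabilityMeasure (χ.map Prod.swap) :=
    Measure.isProbabilityMeasure_map measurable_swap.aemeasurable
  haveI : IsProbabilityMeasure (η.map fun q : (ℝ × ℝ) × (ℝ × ℝ) => ((q.1.1, q.2.1), q.1.2)) :=
    Measure.isProbabilityMeasure_map hg1.aemeasurable
  haveI : IsProbabilityMeasure (η.map fun q : (ℝ × ℝ) × (ℝ × ℝ) => ((q.1.1, q.2.1), q.2.2)) :=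
    Measure.isProbabilityMeasure_map hg2.aemeasurable
  haveI := Kernel.IsMarkovKernel.map γ (measurable_fst (α := ℝ) (β := ℝ))
  haveI := Kernel.IsMarkovKernel.map γ (measurable_snd (α := ℝ) (β := ℝ))
  have hχfst : χ.map Prod.fst = μ := by
    rw [hχ, Measure.map_map measurable_fst hg0, hμ, ← hη1,
      Measure.map_map measurable_fst measurable_fst]
    rfl
  have hχsnd : χ.map Prod.snd = μ' := by
    rw [hχ, Measure.map_map measurable_snd hg0, hμ', ← hη2,
      Measure.map_map measurable_fst measurable_snd]
    rfl
  have hχsw : η.map (fun q => (q.2.1, q.1.1)) = χ.map Prod.swap := by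
    rw [hχ, Measure.map_map measurable_swap hg0]
    rfl
  have hswfst : (χ.map Prod.swap).map Prod.fst = μ' := by
    rw [Measure.map_map measurable_fst measurable_swap]
    exact hχsnd
  -- core identities
  have E1 : η.map (fun q => ((q.1.1, q.2.1), q.1.2)) = χ.compProd (γ.map Prod.fst) := by
    rw [hγ, Measure.map_map hg1 hφ, ← Stmt18Aux.compProd_map χ γ measurable_fst]
    rfl
  have E2 : η.map (fun q => ((q.1.1, q.2.1), q.2.2)) = χ.compProd (γ.map Prod.snd) := by
    rw [hγ, Measure.map_map hg2 hφ, ← Stmt18Aux.compProd_map χ γ measurable_snd]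
    rfl
  have E3 : ∀ (ξ : Kernel ℝ ℝ) (_ : IsSFiniteKernel ξ), χ = μ.compProd ξ →
      π.compProd (ξ.comap Prod.fst measurable_fst)
        = (χ.compProd (κπ.comap Prod.fst measurable_fst)).map
            (fun p => ((p.1.1, p.2), p.1.2)) := by
    intro ξ hsξ hξ
    haveI := hsξ
    rw [hπd, Stmt18Aux.fubini_swap μ κπ ξ, ← hξ]
  have E4 : ∀ (ξ' : Kernel ℝ ℝ) (_ : IsSFiniteKernel ξ'), χ.map Prod.swap = μ'.compProd ξ' →
      π'.compProd (ξ'.comap Prod.fst measurable_fst)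
        = (χ.compProd (κπ'.comap Prod.snd measurable_snd)).map
            (fun p => ((p.1.2, p.2), p.1.1)) := by
    intro ξ' hsξ hξ'
    haveI := hsξ
    rw [hπ'd, Stmt18Aux.fubini_swap μ' κπ' ξ', ← hξ', Stmt18Aux.snd_swap χ κπ',
      Measure.map_map hT' (by fun_prop : Measurable fun r : (ℝ × ℝ) × ℝ => ((r.1.2, r.1.1), r.2))]
    rfl
  have E5 : η.map (fun q => (q.1, q.2.1))
      = (η.map (fun q => ((q.1.1, q.2.1), q.1.2))).map
          (fun p => ((p.1.1, p.2), p.1.2)) := by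
    rw [Measure.map_map hT hg1]
    rfl
  have E6 : η.map (fun q => (q.2, q.1.1))
      = (η.map (fun q => ((q.1.1, q.2.1), q.2.2))).map
          (fun p => ((p.1.2, p.2), p.1.1)) := by
    rw [Measure.map_map hT' hg2]
    rfl
  have hθ1fst : (η.map (fun q => ((q.1.1, q.2.1), q.1.2))).fst = χ := by
    show (η.map (fun q => ((q.1.1, q.2.1), q.1.2))).map Prod.fst = χ
    rw [Measure.map_map measurable_fst hg1, hχ]
    rfl
  have hθ2fst : (η.map (fun q => ((q.1.1, q.2.1), q.2.2))).fst = χ := by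
    show (η.map (fun q => ((q.1.1, q.2.1), q.2.2))).map Prod.fst = χ
    rw [Measure.map_map measurable_fst hg2, hχ]
    rfl
  have hTT : ∀ ρ : Measure ((ℝ × ℝ) × ℝ),
      (ρ.map (fun p => ((p.1.1, p.2), p.1.2))).map (fun p => ((p.1.1, p.2), p.1.2)) = ρ := by
    intro ρ
    rw [Measure.map_map hT hT]
    exact Measure.map_id
  have hT3 : ∀ ρ : Measure ((ℝ × ℝ) × ℝ),
      (((ρ.map (fun p => ((p.1.2, p.2), p.1.1))).map
        (fun p => ((p.1.2, p.2), p.1.1))).map (fun p => ((p.1.2, p.2), p.1.1))) = ρ := by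
    intro ρ
    rw [Measure.map_map hT' hT', Measure.map_map (hT'.comp hT') hT']
    exact Measure.map_id
  constructor
  · rintro ⟨-, -, χ₁', χ₂', hb1, hb2, hb3, hb4⟩
    have hb1' : χ = μ.compProd χ₁' := by rw [hχ, hb1, hμ]
    have hb2' : χ.map Prod.swap = μ'.compProd χ₂' := by rw [← hχsw, hb2, hμ']
    haveI hs1 : IsSFiniteKernel χ₁' := by
      by_contra hs
      have h0 := hb1'
      rw [Measure.compProd_of_not_isSFiniteKernel _ _ hs] at h0
      have h1 : (1 : ENNReal) = 0 := by rw [← measure_univ (μ := χ), h0]; simp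
      simp at h1
    haveI hs2 : IsSFiniteKernel χ₂' := by
      by_contra hs
      have h0 := hb2'
      rw [Measure.compProd_of_not_isSFiniteKernel _ _ hs] at h0
      have h1 : (1 : ENNReal) = 0 := by
        rw [← measure_univ (μ := χ.map Prod.swap), h0]; simp
      simp at h1
    -- first coordinate
    have hθa : η.map (fun q => ((q.1.1, q.2.1), q.1.2)) = χ.compProd (γ.map Prod.fst) := E1
    have hθb : η.map (fun q => ((q.1.1, q.2.1), q.1.2))
        = χ.compProd (κπ.comap Prod.fst measurable_fst) := by
      have h1 : (η.map (fun q => ((q.1.1, q.2.1), q.1.2))).map (fun p => ((p.1.1, p.2), p.1.2))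
          = (χ.compProd (κπ.comap Prod.fst measurable_fst)).map
              (fun p => ((p.1.1, p.2), p.1.2)) := by
        rw [← E5, hb4, E3 χ₁' hs1 hb1']
      calc η.map (fun q => ((q.1.1, q.2.1), q.1.2))
          = ((η.map (fun q => ((q.1.1, q.2.1), q.1.2))).map
              (fun p => ((p.1.1, p.2), p.1.2))).map (fun p => ((p.1.1, p.2), p.1.2)) :=
            (hTT _).symm
        _ = ((χ.compProd (κπ.comap Prod.fst measurable_fst)).map
              (fun p => ((p.1.1, p.2), p.1.2))).map (fun p => ((p.1.1, p.2), p.1.2)) := by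
            rw [h1]
        _ = χ.compProd (κπ.comap Prod.fst measurable_fst) := hTT _
    have hua := ProbabilityTheory.eq_condKernel_of_measure_eq_compProd (γ.map Prod.fst)
      (by rw [hθ1fst]; exact hθa)
    have hub := ProbabilityTheory.eq_condKernel_of_measure_eq_compProd
      (κπ.comap Prod.fst measurable_fst) (by rw [hθ1fst]; exact hθb)
    rw [hθ1fst] at hua hub
    have haefst : ∀ᵐ q ∂χ, (γ q).map Prod.fst = κπ q.1 := by
      filter_upwards [hua, hub] with q h1 h2
      rw [← Kernel.map_apply _ measurable_fst, h1, ← h2, Kernel.comap_apply]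
    -- second coordinate
    have hθ2a : η.map (fun q => ((q.1.1, q.2.1), q.2.2)) = χ.compProd (γ.map Prod.snd) := E2
    have hθ2b : η.map (fun q => ((q.1.1, q.2.1), q.2.2))
        = χ.compProd (κπ'.comap Prod.snd measurable_snd) := by
      have h1 : (η.map (fun q => ((q.1.1, q.2.1), q.2.2))).map (fun p => ((p.1.2, p.2), p.1.1))
          = (χ.compProd (κπ'.comap Prod.snd measurable_snd)).map
              (fun p => ((p.1.2, p.2), p.1.1)) := by
        rw [← E6, hb3, E4 χ₂' hs2 hb2']
      calc η.map (fun q => ((q.1.1, q.2.1), q.2.2))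
          = (((η.map (fun q => ((q.1.1, q.2.1), q.2.2))).map
              (fun p => ((p.1.2, p.2), p.1.1))).map
              (fun p => ((p.1.2, p.2), p.1.1))).map (fun p => ((p.1.2, p.2), p.1.1)) :=
            (hT3 _).symm
        _ = (((χ.compProd (κπ'.comap Prod.snd measurable_snd)).map
              (fun p => ((p.1.2, p.2), p.1.1))).map
              (fun p => ((p.1.2, p.2), p.1.1))).map (fun p => ((p.1.2, p.2), p.1.1)) := by
            rw [h1]
        _ = χ.compProd (κπ'.comap Prod.snd measurable_snd) := hT3 _
    have hua2 := ProbabilityTheory.eq_condKernel_of_measure_eq_compProd (γ.map Prod.snd)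
      (by rw [hθ2fst]; exact hθ2a)
    have hub2 := ProbabilityTheory.eq_condKernel_of_measure_eq_compProd
      (κπ'.comap Prod.snd measurable_snd) (by rw [hθ2fst]; exact hθ2b)
    rw [hθ2fst] at hua2 hub2
    have haesnd : ∀ᵐ q ∂χ, (γ q).map Prod.snd = κπ' q.2 := by
      filter_upwards [hua2, hub2] with q h1 h2
      rw [← Kernel.map_apply _ measurable_snd, h1, ← h2, Kernel.comap_apply]
    filter_upwards [haefst, haesnd] with q h1 h2
    exact ⟨h1, h2⟩
  · intro hae
    have hccf : χ.compProd (γ.map Prod.fst)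
        = χ.compProd (κπ.comap Prod.fst measurable_fst) := by
      refine Measure.compProd_congr ?_
      filter_upwards [hae] with q hq
      show (γ.map Prod.fst) q = (κπ.comap Prod.fst measurable_fst) q
      rw [Kernel.map_apply _ measurable_fst, Kernel.comap_apply, hq.1]
    have hccs : χ.compProd (γ.map Prod.snd)
        = χ.compProd (κπ'.comap Prod.snd measurable_snd) := by
      refine Measure.compProd_congr ?_
      filter_upwards [hae] with q hq
      show (γ.map Prod.snd) q = (κπ'.comap Prod.snd measurable_snd) q
      rw [Kernel.map_apply _ measurable_snd, Kernel.comap_apply, hq.2]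
    have hd1 : χ = μ.compProd χ.condKernel := by
      rw [← hχfst]
      exact (χ.disintegrate χ.condKernel).symm
    have hd2 : χ.map Prod.swap = μ'.compProd (χ.map Prod.swap).condKernel := by
      rw [← hswfst]
      exact ((χ.map Prod.swap).disintegrate (χ.map Prod.swap).condKernel).symm
    refine ⟨hη1, hη2, χ.condKernel, (χ.map Prod.swap).condKernel, ?_, ?_, ?_, ?_⟩
    · rw [← hχ, ← hμ]
      exact hd1
    · rw [hχsw, ← hμ']
      exact hd2
    · rw [E6, E2, hccs]
      exact (E4 _ inferInstance hd2).symm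
    · rw [E5, E1, hccf]
      exact (E3 _ inferInstance hd1).symm
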